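/- arXiv:2508.16061 — 2 statements merged into one kernel-verified Lean document; each statement's English description precedes it below -/
import Mathlib

section
/- Assume a₁₂ is of class C^{2,1} on [−1,1]². For every u ∈ C⁴([−1,1]²) there exists a constant C > 0 such that for every even N ≥ 4 (h = 2/N) and every interior grid node (x,y), |(L_h⁺ u)(x,y) − ( ∂x(a₁₂ ∂y u)(x,y) + ∂y(a₁₂ ∂x u)(x,y) )| ≤ C h². -/
open Set

noncomputable section

/-- The closed square `[-1,1]²` as a subset of `ℝ × ℝ`. -/
def Q2 : Set (ℝ × ℝ) := Set.Icc ((-1 : ℝ), (-1 : ℝ)) (1, 1)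

/-- Partial derivative in the first coordinate direction. -/
def px (f : ℝ × ℝ → ℝ) (z : ℝ × ℝ) : ℝ := fderiv ℝ f z (1, 0)

/-- Partial derivative in the second coordinate direction. -/
def py (f : ℝ × ℝ → ℝ) (z : ℝ × ℝ) : ℝ := fderiv ℝ f z (0, 1)

/-- `f` is of class `C^{2,1}` on `s`: twice continuously differentiable with Lipschitz
continuous second derivatives. -/
def C21On (f : ℝ × ℝ → ℝ) (s : Set (ℝ × ℝ)) : Prop :=
  ContDiffOn ℝ 2 f s ∧ ∃ K : NNReal, LipschitzOnWith K (iteratedFDerivWithin ℝ 2 f s) s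

/-- Grid node `(x_i, y_j) = (-1 + i h, -1 + j h)` with `h = 2/N`. -/
def nodePt (N i j : ℕ) : ℝ × ℝ := (-1 + i * (2 / (N : ℝ)), -1 + j * (2 / (N : ℝ)))

/-- The mixed-term operator `L_h⁻` (designed for negative `a₁₂`). -/
def Lhm (a12 : ℝ × ℝ → ℝ) (h : ℝ) (v : ℝ × ℝ → ℝ) (z : ℝ × ℝ) : ℝ :=
  (1 / (2 * h ^ 2)) *
    (-(a12 (z.1 - h / 2, z.2 + h) + a12 (z.1 - h, z.2 + h / 2)) * v (z.1 - h, z.2 + h)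
      + (a12 (z.1 - h / 2, z.2 + h) + a12 (z.1, z.2 + h / 2)) * v (z.1, z.2 + h)
      + (a12 (z.1 - h, z.2 + h / 2) + a12 (z.1 - h / 2, z.2)) * v (z.1 - h, z.2)
      - (a12 (z.1, z.2 + h / 2) + a12 (z.1 - h / 2, z.2)
          + a12 (z.1, z.2 - h / 2) + a12 (z.1 + h / 2, z.2)) * v z
      + (a12 (z.1 + h, z.2 - h / 2) + a12 (z.1 + h / 2, z.2)) * v (z.1 + h, z.2)
      + (a12 (z.1, z.2 - h / 2) + a12 (z.1 + h / 2, z.2 - h)) * v (z.1, z.2 - h)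
      - (a12 (z.1 + h, z.2 - h / 2) + a12 (z.1 + h / 2, z.2 - h)) * v (z.1 + h, z.2 - h))

/-- The mixed-term operator `L_h⁺` (designed for nonnegative `a₁₂`). -/
def Lhp (a12 : ℝ × ℝ → ℝ) (h : ℝ) (v : ℝ × ℝ → ℝ) (z : ℝ × ℝ) : ℝ :=
  (1 / (2 * h ^ 2)) *
    (-(a12 (z.1 + h / 2, z.2 + h) + a12 (z.1, z.2 + h / 2)) * v (z.1, z.2 + h)
      + (a12 (z.1 + h / 2, z.2 + h) + a12 (z.1 + h, z.2 + h / 2)) * v (z.1 + h, z.2 + h)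
      - (a12 (z.1 - h, z.2 - h / 2) + a12 (z.1 - h / 2, z.2)) * v (z.1 - h, z.2)
      + (a12 (z.1, z.2 + h / 2) + a12 (z.1 - h / 2, z.2)
          + a12 (z.1, z.2 - h / 2) + a12 (z.1 + h / 2, z.2)) * v z
      - (a12 (z.1 + h, z.2 + h / 2) + a12 (z.1 + h / 2, z.2)) * v (z.1 + h, z.2)
      + (a12 (z.1 - h, z.2 - h / 2) + a12 (z.1 - h / 2, z.2 - h)) * v (z.1 - h, z.2 - h)
      - (a12 (z.1, z.2 - h / 2) + a12 (z.1 - h / 2, z.2 - h)) * v (z.1, z.2 - h))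

/-!
`L_h⁺` is the sum of two stencils of the same shape, one for `∂x(a ∂y u)` and one for
`∂y(a ∂x u)`. Each is in conservative form `(F(m₁) - F(m₂) + F(m₃) - F(m₄)) / (2h²)`, with the
discrete fluxes `F(m) = a(m) (u(m + h/2 d') - u(m - h/2 d'))` taken at
`m₁ = z + h d + h/2 d'`, `m₂ = z + h/2 d'`, `m₃ = z - h/2 d'`, `m₄ = z - h d - h/2 d'`.
Every estimate is a Taylor expansion along a line whose top derivative is only Lipschitz:
`F(m) = h ψ(m) + h³/24 χ(m) + O(h⁴)` with `ψ = a ∂_{d'} u` and `χ = a ∂³_{d'} u`; the two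
differences of `ψ` are central differences in direction `d` about `z ± h/2 (d + d')`, whose
average is `∂_d ψ(z) + O(h²)`; and `χ` is Lipschitz, so its four values cancel up to `O(h)`.
The `C^{2,1}` hypothesis on `a` is exactly what makes the second derivatives of `ψ` Lipschitz.
-/

open scoped NNReal Nat

theorem hasDerivAt_taylorSum (c : ℕ → ℝ) (n : ℕ) (t : ℝ) :
    HasDerivAt (fun t => ∑ k ∈ Finset.range (n + 2), c k * t ^ k / k !)
      (∑ k ∈ Finset.range (n + 1), c (k + 1) * t ^ k / k !) t := by
  have hterm : ∀ k, HasDerivAt (fun t => c (k + 1) * t ^ (k + 1) / (k + 1)!)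
      (c (k + 1) * t ^ k / k !) t := fun k => by
    refine (((hasDerivAt_pow (k + 1) t).const_mul (c (k + 1))).div_const _).congr_deriv ?_
    rw [Nat.factorial_succ]
    push_cast
    field_simp
  simp_rw [Finset.sum_range_succ' _ (n + 1)]
  simpa using (HasDerivAt.fun_sum fun k _ => hterm k).const_add (c 0)

theorem abs_sub_taylorSum_le {r : ℝ} {K : ℝ≥0} (n : ℕ) {F : ℕ → ℝ → ℝ}
    (hF : ∀ k < n, ∀ t ∈ Icc (-r) r, HasDerivWithinAt (F k) (F (k + 1) t) (Icc (-r) r) t)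
    (hK : LipschitzOnWith K (F n) (Icc (-r) r)) {t : ℝ} (ht : t ∈ Icc (-r) r) :
    |F 0 t - ∑ k ∈ Finset.range (n + 1), F k 0 * t ^ k / k !| ≤ K * r ^ n * |t| := by
  have h0 : (0 : ℝ) ∈ Icc (-r) r := ⟨by linarith [ht.1, ht.2], by linarith [ht.1, ht.2]⟩
  induction n generalizing F t with
  | zero => simpa [Real.dist_eq] using hK.dist_le_mul t ht 0 h0
  | succ n ih =>
    have hderiv : ∀ s ∈ Icc (-r) r, HasDerivWithinAt
        (fun t => F 0 t - ∑ k ∈ Finset.range (n + 2), F k 0 * t ^ k / k !)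
        (F 1 s - ∑ k ∈ Finset.range (n + 1), F (k + 1) 0 * s ^ k / k !) (Icc (-r) r) s :=
      fun s hs => (hF 0 n.succ_pos s hs).sub
        (hasDerivAt_taylorSum (fun k => F k 0) n s).hasDerivWithinAt
    have hbound : ∀ s ∈ Icc (-r) r,
        ‖(F 1 s - ∑ k ∈ Finset.range (n + 1), F (k + 1) 0 * s ^ k / k !)‖ ≤ K * r ^ (n + 1) := by
      intro s hs
      have hr : 0 ≤ r := by linarith [h0.1, h0.2]
      calc _ ≤ K * r ^ n * |s| :=
            ih (F := fun k => F (k + 1)) (fun k hk => hF (k + 1) (by omega)) hK hs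
        _ ≤ K * r ^ n * r := by gcongr; exact abs_le.2 hs
        _ = K * r ^ (n + 1) := by ring
    simpa [Finset.sum_range_succ'] using
      (convex_Icc (-r) r).norm_image_sub_le_of_norm_hasDerivWithin_le hderiv hbound h0 ht

variable {E : Type*} [NormedAddCommGroup E] [NormedSpace ℝ E] {s : Set E}

/-- The Fréchet derivative within `s` applied to `v` (rather than `lineDerivWithin`), so that it
is linear in `v` and ties in with `iteratedFDerivWithin`, in which `C^{2,1}` is phrased. -/
def dirDeriv (s : Set E) (v : E) (f : E → ℝ) (x : E) : ℝ := fderivWithin ℝ f s x v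

theorem hasDerivWithinAt_comp_line {f : E → ℝ} {m v : E} {I : Set ℝ}
    (hf : DifferentiableOn ℝ f s) (hI : MapsTo (fun t => m + t • v) I s) {t : ℝ} (ht : t ∈ I) :
    HasDerivWithinAt (fun t => f (m + t • v)) (dirDeriv s v f (m + t • v)) I t := by
  have hline : HasDerivWithinAt (fun t : ℝ => m + t • v) v I t := by
    simpa using ((hasDerivAt_id t).smul_const v).const_add m |>.hasDerivWithinAt
  exact (hf _ (hI ht)).hasFDerivWithinAt.comp_hasDerivWithinAt t hline hI

theorem lipschitzWith_line (m v : E) : LipschitzWith ‖v‖₊ (fun t : ℝ => m + t • v) :=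
  LipschitzWith.of_dist_le_mul fun t t' => by
    simp [dist_eq_norm, ← sub_smul, norm_smul, mul_comm]

theorem abs_sub_taylorSum_dirDeriv_le {f : E → ℝ} {m v : E} {r : ℝ} {K : ℝ≥0} (n : ℕ)
    (hf : ∀ k < n, DifferentiableOn ℝ ((dirDeriv s v)^[k] f) s)
    (hK : LipschitzOnWith K ((dirDeriv s v)^[n] f) s)
    (hseg : MapsTo (fun t => m + t • v) (Icc (-r) r) s) {t : ℝ} (ht : t ∈ Icc (-r) r) :
    |f (m + t • v) - ∑ k ∈ Finset.range (n + 1), (dirDeriv s v)^[k] f m * t ^ k / k !|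
      ≤ K * ‖v‖ * r ^ n * |t| := by
  have := abs_sub_taylorSum_le n (F := fun k t => (dirDeriv s v)^[k] f (m + t • v))
    (fun k hk t ht => by
      simpa only [Function.iterate_succ_apply'] using
        hasDerivWithinAt_comp_line (hf k hk) hseg ht)
    (hK.comp (lipschitzWith_line m v).lipschitzOnWith hseg) ht
  simpa using this

section CentralDifferences

variable {f : E → ℝ} {m v : E} {r : ℝ} {K : ℝ≥0}

theorem abs_centralDiff_sub_sub_le (hr : 0 ≤ r)
    (hf : ∀ k < 3, DifferentiableOn ℝ ((dirDeriv s v)^[k] f) s)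
    (hK : LipschitzOnWith K ((dirDeriv s v)^[3] f) s)
    (hseg : MapsTo (fun t => m + t • v) (Icc (-r) r) s) :
    |f (m + r • v) - f (m - r • v) - 2 * r * dirDeriv s v f m
        - r ^ 3 / 3 * (dirDeriv s v)^[3] f m| ≤ 2 * K * ‖v‖ * r ^ 4 := by
  have hp := abs_sub_taylorSum_dirDeriv_le 3 hf hK hseg (t := r) (by simp [hr])
  have hn := abs_sub_taylorSum_dirDeriv_le 3 hf hK hseg (t := -r) (by simp [hr])
  simp only [Finset.sum_range_succ, Finset.range_one, Finset.sum_singleton, Function.iterate_zero,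
    id_eq, pow_zero, mul_one, Nat.factorial, Nat.cast_one, div_one, pow_one,
    Nat.succ_eq_add_one, zero_add, Function.iterate_succ, Function.comp_apply, Nat.cast_ofNat,
    Nat.reduceAdd, Nat.reduceMul, abs_of_nonneg hr, neg_smul, ← sub_eq_add_neg, mul_neg,
    even_two, Even.neg_pow, Odd.neg_pow (by decide : Odd 3), abs_neg] at hp hn
  simp only [Function.iterate_succ_apply', Function.iterate_zero_apply]
  rw [abs_le] at hp hn ⊢
  constructor <;> linarith

theorem abs_centralDiff_sub_le (hr : 0 ≤ r)
    (hf : ∀ k < 2, DifferentiableOn ℝ ((dirDeriv s v)^[k] f) s)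
    (hK : LipschitzOnWith K ((dirDeriv s v)^[2] f) s)
    (hseg : MapsTo (fun t => m + t • v) (Icc (-r) r) s) :
    |f (m + r • v) - f (m - r • v) - 2 * r * dirDeriv s v f m| ≤ 2 * K * ‖v‖ * r ^ 3 := by
  have hp := abs_sub_taylorSum_dirDeriv_le 2 hf hK hseg (t := r) (by simp [hr])
  have hn := abs_sub_taylorSum_dirDeriv_le 2 hf hK hseg (t := -r) (by simp [hr])
  simp only [Finset.sum_range_succ, Finset.range_one, Finset.sum_singleton, Function.iterate_zero,
    id_eq, pow_zero, mul_one, Nat.factorial, Nat.cast_one, div_one, pow_one,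
    Nat.succ_eq_add_one, zero_add, Function.iterate_succ, Function.comp_apply, Nat.cast_ofNat,
    Nat.reduceAdd, abs_of_nonneg hr, neg_smul, ← sub_eq_add_neg, mul_neg, even_two, Even.neg_pow,
    abs_neg] at hp hn
  rw [abs_le] at hp hn ⊢
  constructor <;> linarith

theorem abs_centralSecondDiff_le (hr : 0 ≤ r) (hf : DifferentiableOn ℝ f s)
    (hK : LipschitzOnWith K (dirDeriv s v f) s)
    (hseg : MapsTo (fun t => m + t • v) (Icc (-r) r) s) :
    |f (m + r • v) + f (m - r • v) - 2 * f m| ≤ 2 * K * ‖v‖ * r ^ 2 := by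
  have hf' : ∀ k < 1, DifferentiableOn ℝ ((dirDeriv s v)^[k] f) s := by simpa using hf
  have hp := abs_sub_taylorSum_dirDeriv_le 1 hf' hK hseg (t := r) (by simp [hr])
  have hn := abs_sub_taylorSum_dirDeriv_le 1 hf' hK hseg (t := -r) (by simp [hr])
  simp only [Finset.sum_range_succ, Finset.range_one, Finset.sum_singleton, Function.iterate_zero,
    id_eq, pow_zero, mul_one, Nat.factorial_zero, Nat.cast_one, div_one, Function.iterate_one,
    pow_one, Nat.factorial_one, Nat.reduceAdd, abs_of_nonneg hr, neg_smul, ← sub_eq_add_neg,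
    mul_neg, abs_neg] at hp hn
  rw [abs_le] at hp hn ⊢
  constructor <;> linarith

end CentralDifferences

theorem LipschitzOnWith.congr {α β : Type*} [PseudoEMetricSpace α] [PseudoEMetricSpace β]
    {K : ℝ≥0} {f g : α → β} {s : Set α} (hf : LipschitzOnWith K f s) (h : EqOn f g s) :
    LipschitzOnWith K g s :=
  fun x hx y hy => by rw [← h hx, ← h hy]; exact hf hx hy

theorem IsCompact.exists_lipschitzOnWith_mul {α : Type*} [PseudoMetricSpace α] {s : Set α}
    {f g : α → ℝ} (hs : IsCompact s) (hf : ∃ K, LipschitzOnWith K f s)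
    (hg : ∃ K, LipschitzOnWith K g s) : ∃ K, LipschitzOnWith K (fun x => f x * g x) s := by
  obtain ⟨Kf, hKf⟩ := hf
  obtain ⟨Kg, hKg⟩ := hg
  obtain ⟨Cf, hCf⟩ := hs.exists_bound_of_continuousOn hKf.continuousOn
  obtain ⟨Cg, hCg⟩ := hs.exists_bound_of_continuousOn hKg.continuousOn
  refine ⟨_, LipschitzOnWith.of_dist_le' (K := Cf * Kg + Cg * Kf) fun x hx y hy => ?_⟩
  have hfx : |f x| ≤ Cf := hCf x hx
  have hgy : |g y| ≤ Cg := hCg y hy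
  rw [Real.dist_eq, show f x * g x - f y * g y = f x * (g x - g y) + g y * (f x - f y) by ring]
  calc _ ≤ |f x| * |g x - g y| + |g y| * |f x - f y| := by
        rw [← abs_mul, ← abs_mul]; exact abs_add_le _ _
    _ ≤ Cf * (Kg * dist x y) + Cg * (Kf * dist x y) := by
        gcongr
        · exact (abs_nonneg _).trans hfx
        · exact hKg.dist_le_mul x hx y hy
        · exact (abs_nonneg _).trans hgy
        · exact hKf.dist_le_mul x hx y hy
    _ = (Cf * Kg + Cg * Kf) * dist x y := by ring

section Leibniz

variable {f g : E → ℝ} {v w x : E}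

theorem dirDeriv_congr (h : EqOn f g s) (hx : x ∈ s) : dirDeriv s v f x = dirDeriv s v g x := by
  rw [dirDeriv, dirDeriv, fderivWithin_congr' h.symm hx]

theorem dirDeriv_add (hs : UniqueDiffOn ℝ s) (hx : x ∈ s) (hf : DifferentiableWithinAt ℝ f s x)
    (hg : DifferentiableWithinAt ℝ g s x) :
    dirDeriv s v (fun y => f y + g y) x = dirDeriv s v f x + dirDeriv s v g x := by
  simp [dirDeriv, fderivWithin_fun_add (hs x hx) hf hg]

theorem dirDeriv_mul (hs : UniqueDiffOn ℝ s) (hx : x ∈ s) (hf : DifferentiableWithinAt ℝ f s x)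
    (hg : DifferentiableWithinAt ℝ g s x) :
    dirDeriv s v (fun y => f y * g y) x = f x * dirDeriv s v g x + g x * dirDeriv s v f x := by
  simp [dirDeriv, fderivWithin_fun_mul (hs x hx) hf hg]

theorem ContDiffOn.dirDeriv {m n : WithTop ℕ∞} (hf : ContDiffOn ℝ n f s) (hs : UniqueDiffOn ℝ s)
    (hmn : m + 1 ≤ n) (v : E) : ContDiffOn ℝ m (_root_.dirDeriv s v f) s :=
  (hf.fderivWithin hs hmn).clm_apply contDiffOn_const

theorem ContDiffOn.iterate_dirDeriv {n k : ℕ} (hf : ContDiffOn ℝ (n + k : ℕ) f s)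
    (hs : UniqueDiffOn ℝ s) (v : E) : ContDiffOn ℝ n ((_root_.dirDeriv s v)^[k] f) s := by
  induction k generalizing f with
  | zero => exact hf
  | succ k ih =>
    exact ih (hf.dirDeriv hs (by exact_mod_cast (by omega : n + k + 1 ≤ n + (k + 1))) v)

theorem ContDiffOn.differentiableOn_iterate_dirDeriv {n k : ℕ} (hf : ContDiffOn ℝ n f s)
    (hs : UniqueDiffOn ℝ s) (v : E) (hk : k < n) :
    DifferentiableOn ℝ ((_root_.dirDeriv s v)^[k] f) s :=
  ((hf.of_le (by exact_mod_cast (by omega : 1 + k ≤ n))).iterate_dirDeriv hs v).differentiableOn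
    one_ne_zero

theorem dirDeriv_dirDeriv_mul (hs : UniqueDiffOn ℝ s) (hf : ContDiffOn ℝ 2 f s)
    (hg : ContDiffOn ℝ 2 g s) (hx : x ∈ s) :
    dirDeriv s w (dirDeriv s v (fun y => f y * g y)) x =
      f x * dirDeriv s w (dirDeriv s v g) x + dirDeriv s v g x * dirDeriv s w f x
        + (g x * dirDeriv s w (dirDeriv s v f) x + dirDeriv s v f x * dirDeriv s w g x) := by
  have hf₁ := hf.differentiableOn two_ne_zero
  have hg₁ := hg.differentiableOn two_ne_zero
  have hf₂ := (hf.dirDeriv hs le_rfl v).differentiableOn one_ne_zero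
  have hg₂ := (hg.dirDeriv hs le_rfl v).differentiableOn one_ne_zero
  rw [dirDeriv_congr (fun y hy => dirDeriv_mul hs hy (hf₁ y hy) (hg₁ y hy)) hx,
    dirDeriv_add (f := fun y => f y * dirDeriv s v g y) (g := fun y => g y * dirDeriv s v f y)
      hs hx ((hf₁ x hx).mul (hg₂ x hx)) ((hg₁ x hx).mul (hf₂ x hx)),
    dirDeriv_mul hs hx (hf₁ x hx) (hg₂ x hx), dirDeriv_mul hs hx (hg₁ x hx) (hf₂ x hx)]

theorem dirDeriv_dirDeriv_eq_iteratedFDerivWithin (hs : UniqueDiffOn ℝ s)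
    (hf : ContDiffOn ℝ 2 f s) (hx : x ∈ s) :
    dirDeriv s w (dirDeriv s v f) x = iteratedFDerivWithin ℝ 2 f s x ![w, v] := by
  have hdf := (hf.fderivWithin hs (m := 1) le_rfl).differentiableOn one_ne_zero x hx
  rw [iteratedFDerivWithin_two_apply f hs hx]
  unfold dirDeriv
  simp [fderivWithin_clm_apply (hs x hx) hdf (differentiableWithinAt_const v)]

theorem exists_lipschitzOnWith_dirDeriv_dirDeriv {K : ℝ≥0} (hs : UniqueDiffOn ℝ s)
    (hf : ContDiffOn ℝ 2 f s) (hK : LipschitzOnWith K (iteratedFDerivWithin ℝ 2 f s) s)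
    (v w : E) : ∃ K', LipschitzOnWith K' (dirDeriv s w (dirDeriv s v f)) s :=
  ⟨_, ((ContinuousMultilinearMap.apply ℝ (fun _ : Fin 2 => E) ℝ ![w, v]).lipschitz
    |>.comp_lipschitzOnWith hK).congr fun _ hx =>
      (dirDeriv_dirDeriv_eq_iteratedFDerivWithin hs hf hx).symm⟩

theorem exists_lipschitzOnWith_dirDeriv_dirDeriv_mul (hconv : Convex ℝ s) (hcpt : IsCompact s)
    (hs : UniqueDiffOn ℝ s) (hf : ContDiffOn ℝ 2 f s) (hg : ContDiffOn ℝ 2 g s)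
    (hf' : ∃ K, LipschitzOnWith K (dirDeriv s w (dirDeriv s v f)) s)
    (hg' : ∃ K, LipschitzOnWith K (dirDeriv s w (dirDeriv s v g)) s) :
    ∃ K, LipschitzOnWith K (dirDeriv s w (dirDeriv s v (fun x => f x * g x))) s := by
  have lip : ∀ {f₀ : E → ℝ}, ContDiffOn ℝ 1 f₀ s → ∃ K, LipschitzOnWith K f₀ s :=
    fun h => h.exists_lipschitzOnWith one_ne_zero hconv hcpt
  obtain ⟨K₁, h₁⟩ := hcpt.exists_lipschitzOnWith_mul (lip (hf.of_le (by norm_num))) hg'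
  obtain ⟨K₂, h₂⟩ := hcpt.exists_lipschitzOnWith_mul (lip (hg.dirDeriv hs le_rfl v))
    (lip (hf.dirDeriv hs le_rfl w))
  obtain ⟨K₃, h₃⟩ := hcpt.exists_lipschitzOnWith_mul (lip (hg.of_le (by norm_num))) hf'
  obtain ⟨K₄, h₄⟩ := hcpt.exists_lipschitzOnWith_mul (lip (hf.dirDeriv hs le_rfl v))
    (lip (hg.dirDeriv hs le_rfl w))
  exact ⟨_, ((h₁.add h₂).add (h₃.add h₄)).congr fun x hx =>
    (dirDeriv_dirDeriv_mul hs hf hg hx).symm⟩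

end Leibniz

def flux (a u : E → ℝ) (h : ℝ) (d' m : E) : ℝ :=
  a m * (u (m + (h / 2) • d') - u (m - (h / 2) • d'))

def mixedStencil (a u : E → ℝ) (h : ℝ) (d d' z : E) : ℝ :=
  (flux a u h d' (z + h • d + (h / 2) • d') - flux a u h d' (z + (h / 2) • d')
    + flux a u h d' (z - (h / 2) • d') - flux a u h d' (z - h • d - (h / 2) • d')) / (2 * h ^ 2)

theorem Lhp_eq_mixedStencil_add (a u : ℝ × ℝ → ℝ) (h : ℝ) (z : ℝ × ℝ) :
    Lhp a h u z = mixedStencil a u h (1, 0) (0, 1) z + mixedStencil a u h (0, 1) (1, 0) z := by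
  obtain ⟨x, y⟩ := z
  simp only [Lhp, mixedStencil, flux, Prod.smul_mk, Prod.mk_add_mk, Prod.mk_sub_mk, smul_eq_mul,
    mul_one, mul_zero, add_zero, sub_zero]
  ring_nf

section StencilConsistency

variable {a u ψ χ : E → ℝ} {d d' z : E} {h A : ℝ} {Ku Kψ Kg Kχ : ℝ≥0}

theorem abs_flux_sub_le {m : E} (hh : 0 ≤ h)
    (hm : MapsTo (fun t => m + t • d') (Icc (-(h / 2)) (h / 2)) s) (ha : |a m| ≤ A)
    (hu : ∀ k < 3, DifferentiableOn ℝ ((dirDeriv s d')^[k] u) s)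
    (hKu : LipschitzOnWith Ku ((dirDeriv s d')^[3] u) s) :
    |flux a u h d' m
        - (h * (a m * dirDeriv s d' u m) + h ^ 3 / 24 * (a m * (dirDeriv s d')^[3] u m))|
      ≤ A * (Ku * ‖d'‖ / 8 * h ^ 4) := by
  calc _ = |a m| * |u (m + (h / 2) • d') - u (m - (h / 2) • d')
        - 2 * (h / 2) * dirDeriv s d' u m - (h / 2) ^ 3 / 3 * (dirDeriv s d')^[3] u m| := by
        rw [← abs_mul, flux]; congr 1; ring
    _ ≤ A * (2 * Ku * ‖d'‖ * (h / 2) ^ 4) :=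
        mul_le_mul ha (abs_centralDiff_sub_sub_le (by positivity) hu hKu hm) (abs_nonneg _)
          ((abs_nonneg _).trans ha)
    _ = A * (Ku * ‖d'‖ / 8 * h ^ 4) := by ring

theorem abs_fourPointDiff_sub_le (hh : 0 < h)
    (hz : ∀ α β : ℝ, |α| ≤ h → |β| ≤ h → z + α • d + β • d' ∈ s)
    (hψ : ∀ k < 2, DifferentiableOn ℝ ((dirDeriv s d)^[k] ψ) s)
    (hKψ : LipschitzOnWith Kψ ((dirDeriv s d)^[2] ψ) s)
    (hKg : LipschitzOnWith Kg (dirDeriv s (d + d') (dirDeriv s d ψ)) s) :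
    |ψ (z + h • d + (h / 2) • d') - ψ (z + (h / 2) • d') + ψ (z - (h / 2) • d')
        - ψ (z - h • d - (h / 2) • d') - 2 * h * dirDeriv s d ψ z|
      ≤ (Kψ * ‖d‖ + Kg * ‖d + d'‖) / 2 * h ^ 3 := by
  have hr : 0 ≤ h / 2 := by positivity
  have hhalf : |h / 2| ≤ h / 2 := (abs_of_nonneg hr).le
  have hhalf' : |-(h / 2)| ≤ h / 2 := by rwa [abs_neg]
  have add_le : ∀ {c t : ℝ}, |c| ≤ h / 2 → |t| ≤ h / 2 → |c + t| ≤ h :=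
    fun hc ht => (abs_add_le _ _).trans (by linarith)
  have seg : ∀ c v : E, (∀ t, |t| ≤ h / 2 → ∃ α β : ℝ, |α| ≤ h ∧ |β| ≤ h ∧
      c + t • v = z + α • d + β • d') → MapsTo (fun t => c + t • v) (Icc (-(h / 2)) (h / 2)) s :=
    fun c v H t ht => by
      obtain ⟨α, β, hα, hβ, e⟩ := H t (abs_le.2 ht)
      simpa only [e] using hz α β hα hβ
  have hplus := abs_centralDiff_sub_le hr hψ hKψ (seg (z + (h / 2) • d + (h / 2) • d') d
    fun t ht => ⟨h / 2 + t, h / 2, add_le hhalf ht, by linarith, by module⟩)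
  have hminus := abs_centralDiff_sub_le hr hψ hKψ (seg (z - (h / 2) • d - (h / 2) • d') d
    fun t ht => ⟨-(h / 2) + t, -(h / 2), add_le hhalf' ht, by linarith, by module⟩)
  have hmid := abs_centralSecondDiff_le hr (by simpa using hψ 1 one_lt_two) hKg
    (seg z (d + d') fun t ht => ⟨t, t, by linarith, by linarith, by module⟩)
  rw [show z + (h / 2) • d + (h / 2) • d' + (h / 2) • d = z + h • d + (h / 2) • d' by module,
    show z + (h / 2) • d + (h / 2) • d' - (h / 2) • d = z + (h / 2) • d' by module] at hplus
  rw [show z - (h / 2) • d - (h / 2) • d' + (h / 2) • d = z - (h / 2) • d' by module,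
    show z - (h / 2) • d - (h / 2) • d' - (h / 2) • d = z - h • d - (h / 2) • d' by module]
    at hminus
  rw [show z + (h / 2) • (d + d') = z + (h / 2) • d + (h / 2) • d' by module,
    show z - (h / 2) • (d + d') = z - (h / 2) • d - (h / 2) • d' by module] at hmid
  have hmid' : |h * (dirDeriv s d ψ (z + (h / 2) • d + (h / 2) • d')
      + dirDeriv s d ψ (z - (h / 2) • d - (h / 2) • d') - 2 * dirDeriv s d ψ z)|
        ≤ h * (2 * Kg * ‖d + d'‖ * (h / 2) ^ 2) := by
    rw [abs_mul, abs_of_pos hh]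
    gcongr
  rw [abs_le] at hplus hminus hmid' ⊢
  constructor <;> linarith

theorem abs_mixedStencil_sub_le (hh : 0 < h)
    (hz : ∀ α β : ℝ, |α| ≤ h → |β| ≤ h → z + α • d + β • d' ∈ s)
    (ha : ∀ x ∈ s, |a x| ≤ A)
    (hu : ∀ k < 3, DifferentiableOn ℝ ((dirDeriv s d')^[k] u) s)
    (hKu : LipschitzOnWith Ku ((dirDeriv s d')^[3] u) s)
    (hψ_eq : EqOn ψ (fun x => a x * dirDeriv s d' u x) s)
    (hψ : ∀ k < 2, DifferentiableOn ℝ ((dirDeriv s d)^[k] ψ) s)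
    (hKψ : LipschitzOnWith Kψ ((dirDeriv s d)^[2] ψ) s)
    (hKg : LipschitzOnWith Kg (dirDeriv s (d + d') (dirDeriv s d ψ)) s)
    (hχ_eq : EqOn χ (fun x => a x * (dirDeriv s d')^[3] u x) s)
    (hKχ : LipschitzOnWith Kχ χ s) :
    |mixedStencil a u h d d' z - dirDeriv s d ψ z|
      ≤ (A * Ku * ‖d'‖ + Kψ * ‖d‖ + Kg * ‖d + d'‖ + Kχ * ‖d‖ / 6) / 4 * h ^ 2 := by
  have hh' : |h| ≤ h := (abs_of_pos hh).le
  have hh'' : |-h| ≤ h := by rwa [abs_neg]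
  have hzero : |(0 : ℝ)| ≤ h := by simpa using hh.le
  have hhalf : |h / 2| ≤ h / 2 := (abs_of_nonneg (by positivity)).le
  have hhalf' : |-(h / 2)| ≤ h / 2 := by rwa [abs_neg]
  have mem : ∀ m α β, m = z + α • d + β • d' → |α| ≤ h → |β| ≤ h / 2 → m ∈ s :=
    fun m α β hm hα hβ => hm ▸ hz α β hα (hβ.trans (by linarith))
  have hflux : ∀ m α β, m = z + α • d + β • d' → |α| ≤ h → |β| ≤ h / 2 →
      |flux a u h d' m - (h * ψ m + h ^ 3 / 24 * χ m)| ≤ A * (Ku * ‖d'‖ / 8 * h ^ 4) := by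
    rintro m α β rfl hα hβ
    have hm := mem _ α β rfl hα hβ
    rw [hψ_eq hm, hχ_eq hm]
    refine abs_flux_sub_le hh.le (fun t ht => ?_) (ha _ hm) hu hKu
    simpa only [add_assoc, ← add_smul] using
      hz α (β + t) hα ((abs_add_le _ _).trans (by linarith [abs_le.2 ht]))
  have hF₁ := hflux (z + h • d + (h / 2) • d') h (h / 2) rfl hh' hhalf
  have hF₂ := hflux (z + (h / 2) • d') 0 (h / 2) (by module) hzero hhalf
  have hF₃ := hflux (z - (h / 2) • d') 0 (-(h / 2)) (by module) hzero hhalf'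
  have hF₄ := hflux (z - h • d - (h / 2) • d') (-h) (-(h / 2)) (by module) hh'' hhalf'
  have hχ : ∀ p q, p ∈ s → q ∈ s → p - q = h • d → |χ p - χ q| ≤ Kχ * (h * ‖d‖) :=
    fun p q hp hq hpq => by
      simpa [Real.dist_eq, dist_eq_norm, hpq, norm_smul, abs_of_pos hh] using
        hKχ.dist_le_mul p hp q hq
  have hχ₁ := hχ (z + h • d + (h / 2) • d') (z + (h / 2) • d') (mem _ h (h / 2) rfl hh' hhalf)
    (mem _ 0 (h / 2) (by module) hzero hhalf) (by module)
  have hχ₂ := hχ (z - (h / 2) • d') (z - h • d - (h / 2) • d')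
    (mem _ 0 (-(h / 2)) (by module) hzero hhalf') (mem _ (-h) (-(h / 2)) (by module) hh'' hhalf')
    (by module)
  have hψ' : |h * (ψ (z + h • d + (h / 2) • d') - ψ (z + (h / 2) • d') + ψ (z - (h / 2) • d')
      - ψ (z - h • d - (h / 2) • d') - 2 * h * dirDeriv s d ψ z)|
        ≤ h * ((Kψ * ‖d‖ + Kg * ‖d + d'‖) / 2 * h ^ 3) := by
    rw [abs_mul, abs_of_pos hh]
    gcongr
    exact abs_fourPointDiff_sub_le hh hz hψ hKψ hKg
  have hχ' : |h ^ 3 / 24 * (χ (z + h • d + (h / 2) • d') - χ (z + (h / 2) • d')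
      + (χ (z - (h / 2) • d') - χ (z - h • d - (h / 2) • d')))|
        ≤ h ^ 3 / 24 * (2 * (Kχ * (h * ‖d‖))) := by
    rw [abs_mul, abs_of_pos (by positivity)]
    gcongr
    exact (abs_add_le _ _).trans (by linarith)
  have h2 : (0 : ℝ) < 2 * h ^ 2 := by positivity
  rw [mixedStencil, div_sub' h2.ne', abs_div, abs_of_pos h2, div_le_iff₀ h2]
  rw [abs_le] at hF₁ hF₂ hF₃ hF₄ hψ' hχ' ⊢
  constructor <;> linarith

theorem exists_abs_mixedStencil_sub_le (hconv : Convex ℝ s) (hcpt : IsCompact s)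
    (hs : UniqueDiffOn ℝ s) {K : ℝ≥0} (ha : ContDiffOn ℝ 2 a s)
    (hK : LipschitzOnWith K (iteratedFDerivWithin ℝ 2 a s) s) (hu : ContDiffOn ℝ 4 u s)
    (d d' : E) :
    ∃ C, ∀ h > 0, ∀ z, (∀ α β : ℝ, |α| ≤ h → |β| ≤ h → z + α • d + β • d' ∈ s) →
      |mixedStencil a u h d d' z - dirDeriv s d (fun x => a x * dirDeriv s d' u x) z|
        ≤ C * h ^ 2 := by
  have lip : ∀ {f : E → ℝ}, ContDiffOn ℝ 1 f s → ∃ K, LipschitzOnWith K f s :=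
    fun hf => hf.exists_lipschitzOnWith one_ne_zero hconv hcpt
  have hu₁ : ContDiffOn ℝ 3 (dirDeriv s d' u) s := hu.dirDeriv hs (by norm_num) d'
  have hψ : ContDiffOn ℝ 2 (fun x => a x * dirDeriv s d' u x) s :=
    ha.mul (hu₁.of_le (by norm_num))
  have hu₁_lip : ∀ v w, ∃ K, LipschitzOnWith K (dirDeriv s w (dirDeriv s v (dirDeriv s d' u))) s :=
    fun v w => lip ((hu₁.dirDeriv (m := 2) hs (by norm_num) v).dirDeriv hs (by norm_num) w)
  obtain ⟨A, hA⟩ := hcpt.exists_bound_of_continuousOn ha.continuousOn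
  obtain ⟨Ku, hKu⟩ := lip (ContDiffOn.iterate_dirDeriv (n := 1) (k := 3) hu hs d')
  obtain ⟨Kψ, hKψ⟩ := exists_lipschitzOnWith_dirDeriv_dirDeriv_mul hconv hcpt hs ha
    (hu₁.of_le (by norm_num)) (exists_lipschitzOnWith_dirDeriv_dirDeriv hs ha hK d d) (hu₁_lip d d)
  obtain ⟨Kg, hKg⟩ := exists_lipschitzOnWith_dirDeriv_dirDeriv_mul hconv hcpt hs ha
    (hu₁.of_le (by norm_num)) (exists_lipschitzOnWith_dirDeriv_dirDeriv hs ha hK d (d + d'))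
    (hu₁_lip d (d + d'))
  obtain ⟨Kχ, hKχ⟩ := hcpt.exists_lipschitzOnWith_mul (lip (ha.of_le (by norm_num))) ⟨Ku, hKu⟩
  exact ⟨(A * Ku * ‖d'‖ + Kψ * ‖d‖ + Kg * ‖d + d'‖ + Kχ * ‖d‖ / 6) / 4, fun h hh z hz =>
    abs_mixedStencil_sub_le hh hz hA
      (fun k hk => hu.differentiableOn_iterate_dirDeriv (n := 4) hs d' (by omega))
      hKu (fun _ _ => rfl) (fun k hk => hψ.differentiableOn_iterate_dirDeriv hs d hk) hKψ hKg
      (fun _ _ => rfl) hKχ⟩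

end StencilConsistency

theorem fderiv_apply_eq_dirDeriv {f g : E → ℝ} {x : E} (hx : x ∈ interior s)
    (hfg : EqOn f g (interior s)) (v : E) : fderiv ℝ f x v = dirDeriv s v g x := by
  rw [dirDeriv, fderivWithin_of_mem_nhds (mem_interior_iff_mem_nhds.1 hx),
    (Filter.eventuallyEq_of_mem (isOpen_interior.mem_nhds hx) hfg).fderiv_eq]

theorem fderiv_mul_fderiv_apply_eq_dirDeriv {a u : E → ℝ} {x : E} (hx : x ∈ interior s)
    (v w : E) : fderiv ℝ (fun y => a y * fderiv ℝ u y w) x v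
      = dirDeriv s v (fun y => a y * dirDeriv s w u y) x :=
  fderiv_apply_eq_dirDeriv hx (fun y hy => by rw [fderiv_apply_eq_dirDeriv hy fun _ _ => rfl]) v

theorem convex_Q2 : Convex ℝ Q2 := convex_Icc _ _

theorem uniqueDiffOn_Q2 : UniqueDiffOn ℝ Q2 := by
  rw [Q2, ← Icc_prod_Icc]
  exact (uniqueDiffOn_Icc (by norm_num)).prod (uniqueDiffOn_Icc (by norm_num))

theorem interior_Q2 : interior Q2 = Ioo (-1) 1 ×ˢ Ioo (-1) 1 := by
  rw [Q2, ← Icc_prod_Icc, interior_prod_eq, interior_Icc]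

theorem gridCoord_mem_Icc {N k : ℕ} (hN : 0 < N) (hk : 1 ≤ k) (hkN : k ≤ N - 1) :
    -1 + k * (2 / (N : ℝ)) ∈ Icc (-1 + 2 / (N : ℝ)) (1 - 2 / (N : ℝ)) := by
  have hh : 0 < 2 / (N : ℝ) := by positivity
  have hhN : 2 / (N : ℝ) * N = 2 := div_mul_cancel₀ 2 (by positivity)
  have hk' : (1 : ℝ) ≤ k := by exact_mod_cast hk
  have hkN' : (k : ℝ) + 1 ≤ N := by exact_mod_cast (by omega : k + 1 ≤ N)
  constructor <;> nlinarith

theorem nodePt_add_mem_Q2 {N i j : ℕ} (hN : 0 < N) (hi : 1 ≤ i) (hiN : i ≤ N - 1) (hj : 1 ≤ j)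
    (hjN : j ≤ N - 1) {α β : ℝ} (hα : |α| ≤ 2 / N) (hβ : |β| ≤ 2 / N) :
    nodePt N i j + (α, β) ∈ Q2 := by
  obtain ⟨hi₁, hi₂⟩ := gridCoord_mem_Icc hN hi hiN
  obtain ⟨hj₁, hj₂⟩ := gridCoord_mem_Icc hN hj hjN
  rw [abs_le] at hα hβ
  simp only [nodePt, Q2, Prod.mk_add_mk, mem_Icc, Prod.mk_le_mk]
  refine ⟨⟨?_, ?_⟩, ?_, ?_⟩ <;> linarith

theorem nodePt_mem_interior_Q2 {N i j : ℕ} (hN : 0 < N) (hi : 1 ≤ i) (hiN : i ≤ N - 1)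
    (hj : 1 ≤ j) (hjN : j ≤ N - 1) : nodePt N i j ∈ interior Q2 := by
  have hh : 0 < 2 / (N : ℝ) := by positivity
  obtain ⟨hi₁, hi₂⟩ := gridCoord_mem_Icc hN hi hiN
  obtain ⟨hj₁, hj₂⟩ := gridCoord_mem_Icc hN hj hjN
  simp only [interior_Q2, nodePt, mem_prod, mem_Ioo]
  refine ⟨⟨?_, ?_⟩, ?_, ?_⟩ <;> linarith

/-- Second-order consistency of the seven-point discretization `Lhp` (the stencil designed
for nonnegative `a₁₂`) of the mixed-derivative part `∂x(a₁₂ ∂y u) + ∂y(a₁₂ ∂x u)` at interior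
grid nodes. -/
theorem stmt5 (a12 : ℝ × ℝ → ℝ) (ha12 : C21On a12 Q2)
    (u : ℝ × ℝ → ℝ) (hu : ContDiffOn ℝ 4 u Q2) :
    ∃ C > (0 : ℝ), ∀ N : ℕ, Even N → 4 ≤ N →
      ∀ i j : ℕ, 1 ≤ i → i ≤ N - 1 → 1 ≤ j → j ≤ N - 1 →
        |Lhp a12 (2 / (N : ℝ)) u (nodePt N i j) -
            (px (fun w => a12 w * py u w) (nodePt N i j)
              + py (fun w => a12 w * px u w) (nodePt N i j))|
          ≤ C * (2 / (N : ℝ)) ^ 2 := by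
  obtain ⟨ha, K, hK⟩ := ha12
  obtain ⟨C₁, hC₁⟩ := exists_abs_mixedStencil_sub_le convex_Q2 isCompact_Icc uniqueDiffOn_Q2
    ha hK hu (1, 0) (0, 1)
  obtain ⟨C₂, hC₂⟩ := exists_abs_mixedStencil_sub_le convex_Q2 isCompact_Icc uniqueDiffOn_Q2
    ha hK hu (0, 1) (1, 0)
  refine ⟨max (C₁ + C₂) 1, by positivity, fun N _ hN i j hi hiN hj hjN => ?_⟩
  have hN0 : 0 < N := by omega
  have hh : 0 < 2 / (N : ℝ) := by positivity
  have h₁ := hC₁ _ hh (nodePt N i j) fun α β hα hβ => by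
    simpa [add_assoc] using nodePt_add_mem_Q2 hN0 hi hiN hj hjN hα hβ
  have h₂ := hC₂ _ hh (nodePt N i j) fun α β hα hβ => by
    simpa [add_assoc] using nodePt_add_mem_Q2 hN0 hi hiN hj hjN hβ hα
  simp only [Lhp_eq_mixedStencil_add, px, py,
    fderiv_mul_fderiv_apply_eq_dirDeriv (nodePt_mem_interior_Q2 hN0 hi hiN hj hjN)]
  calc _ ≤ C₁ * (2 / (N : ℝ)) ^ 2 + C₂ * (2 / (N : ℝ)) ^ 2 := by
        rw [add_sub_add_comm]
        exact (abs_add_le _ _).trans (add_le_add h₁ h₂)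
    _ ≤ max (C₁ + C₂) 1 * (2 / (N : ℝ)) ^ 2 := by
        rw [← add_mul]
        gcongr
        exact le_max_left _ _
end
end

section
/- Let U be a nonempty bounded open subset of ℝ². Let a₁₁, a₁₂, a₂₂ be continuously differentiable on U and continuous on the closure of U, with the matrix ((a₁₁(x),a₁₂(x)),(a₁₂(x),a₂₂(x))) symmetric positive definite at every point of the closure of U, and let a be continuous on U with a ≥ 0. Suppose u is continuous on the closure of U, twice continuously differentiable in U, satisfies ∂x(a₁₁ ∂x u + a₁₂ ∂y u) + ∂y(a₁₂ ∂x u + a₂₂ ∂y u) − a u = 0 everywhere in U, and u = 0 at every point of the topological frontier of U. Then u = 0 on the closure of U. -/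
/-!
Weak maximum principle. If `u` were positive somewhere, let `2δ > 0` be its maximum and
`W = {u > δ}`; since `u ≤ 0` on the frontier, `closure W` is a compact subset of `U`, so on it
`a11` is bounded below and `∂ₓa11 + ∂ᵧa12` is bounded, and some `α` satisfies
`|∂ₓa11 + ∂ᵧa12| < α a11`. For small `ε > 0` the perturbation `u + ε e^{αx}` attains its maximum
over `closure W` inside `W`. There its gradient vanishes and its Hessian is negative
semidefinite; pairing the Hessian with the positive definite `A` and using the choice of `α`
gives `∇·(A∇u) < 0 ≤ a u`, contradicting the equation. Applied to `u` and `-u`, this gives `u = 0`.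
-/

open Set

noncomputable section

open Filter Topology

theorem IsLocalMax.deriv_deriv_nonpos {f : ℝ → ℝ} {x : ℝ} (h : IsLocalMax f x)
    (hc : ContinuousAt f x) : deriv (deriv f) x ≤ 0 := by
  by_contra! hpos
  -- the second derivative test would make `x` a local minimum too, so `f` is locally constant
  have hmin : IsLocalMin f x := isLocalMin_of_deriv_deriv_pos hpos h.deriv_eq_zero hc
  have hconst : f =ᶠ[𝓝 x] fun _ => f x := (hmin.and h).mono fun y hy => le_antisymm hy.2 hy.1
  have : deriv (deriv f) x = 0 := by
    rw [hconst.deriv.deriv_eq]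
    simp
  linarith

section Line

variable {E : Type*} [NormedAddCommGroup E] [NormedSpace ℝ E] {f : E → ℝ} {x : E}

theorem ContDiffAt.deriv_deriv_comp_line (hf : ContDiffAt ℝ 2 f x) (w : E) :
    deriv (deriv fun t : ℝ => f (x + t • w)) 0 = fderiv ℝ (fderiv ℝ f) x w w := by
  have hline : ∀ t : ℝ, HasDerivAt (fun t : ℝ => x + t • w) w t := fun t => by
    simpa using ((hasDerivAt_id t).smul_const w).const_add x
  have hline0 : Tendsto (fun t : ℝ => x + t • w) (𝓝 0) (𝓝 x) := by
    simpa using (hline 0).continuousAt.tendsto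
  have hderiv : deriv (fun t : ℝ => f (x + t • w)) =ᶠ[𝓝 0]
      fun t => fderiv ℝ f (x + t • w) w := by
    filter_upwards [hline0.eventually (hf.eventually (by simp))] with t ht
    have hft : DifferentiableAt ℝ f (x + t • w) := ht.differentiableAt (by simp)
    exact (hft.hasFDerivAt.comp_hasDerivAt t (hline t)).deriv
  have hf' : HasFDerivAt (fderiv ℝ f) (fderiv ℝ (fderiv ℝ f) x) (x + (0 : ℝ) • w) := by
    rw [zero_smul, add_zero]
    exact ((hf.fderiv_right (m := 1) (by norm_num)).differentiableAt (by norm_num)).hasFDerivAt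
  have hfirst : HasDerivAt (fun t : ℝ => fderiv ℝ f (x + t • w)) (fderiv ℝ (fderiv ℝ f) x w) 0 :=
    hf'.comp_hasDerivAt (x := (0 : ℝ)) (hline 0)
  have hsecond : HasDerivAt (fun t : ℝ => fderiv ℝ f (x + t • w) w)
      (fderiv ℝ (fderiv ℝ f) x w w) 0 := by
    simpa using hfirst.clm_apply (hasDerivAt_const (0 : ℝ) w)
  rw [hderiv.deriv_eq, hsecond.deriv]

theorem IsLocalMax.fderiv_fderiv_apply_self_nonpos (h : IsLocalMax f x) (hf : ContDiffAt ℝ 2 f x)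
    (w : E) : fderiv ℝ (fderiv ℝ f) x w w ≤ 0 := by
  have hline : Continuous fun t : ℝ => x + t • w := by fun_prop
  rw [← hf.deriv_deriv_comp_line]
  refine IsLocalMax.deriv_deriv_nonpos ?_ ?_
  · exact IsLocalMax.comp_continuous (by simpa using h) hline.continuousAt
  · exact hf.continuousAt.comp_of_eq hline.continuousAt (by simp)

theorem fderiv_fderiv_add {g : E → ℝ} (hf : ContDiffAt ℝ 2 f x) (hg : ContDiffAt ℝ 2 g x) :
    fderiv ℝ (fderiv ℝ (f + g)) x = fderiv ℝ (fderiv ℝ f) x + fderiv ℝ (fderiv ℝ g) x := by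
  ext v w
  simpa [iteratedFDeriv_two_apply] using congr($(iteratedFDeriv_add_apply hf hg) ![v, w])

theorem fderiv_fderiv_apply (hf : DifferentiableAt ℝ (fderiv ℝ f) x) (v w : E) :
    fderiv ℝ (fun y => fderiv ℝ f y w) x v = fderiv ℝ (fderiv ℝ f) x v w := by
  rw [fderiv_clm_apply hf (differentiableAt_const w)]
  simp

end Line

theorem ContinuousLinearMap.apply_prod_apply_prod (B : ℝ × ℝ →L[ℝ] ℝ × ℝ →L[ℝ] ℝ) (s t : ℝ) :
    B (s, t) (s, t) = s ^ 2 * B (1, 0) (1, 0) + s * t * (B (1, 0) (0, 1) + B (0, 1) (1, 0))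
      + t ^ 2 * B (0, 1) (0, 1) := by
  have hst : ((s, t) : ℝ × ℝ) = s • ((1 : ℝ), (0 : ℝ)) + t • ((0 : ℝ), (1 : ℝ)) := by simp
  rw [hst]
  simp only [map_add, map_smul, add_apply, smul_apply, smul_eq_mul]
  ring

theorem Matrix.PosDef.fin_two_apply_add_nonpos {p q r : ℝ}
    (hA : (!![p, q; q, r] : Matrix (Fin 2) (Fin 2) ℝ).PosDef)
    {B : ℝ × ℝ →L[ℝ] ℝ × ℝ →L[ℝ] ℝ} (hB : ∀ w, B w w ≤ 0) :
    p * B (1, 0) (1, 0) + q * (B (1, 0) (0, 1) + B (0, 1) (1, 0)) + r * B (0, 1) (0, 1) ≤ 0 := by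
  have hp : 0 < p := by simpa using hA.diag_pos (i := 0)
  have hdet : 0 < p * r - q * q := by simpa [Matrix.det_fin_two_of] using hA.det_pos
  -- with `w = (p, q)`, `p` times the left-hand side is `B w w + (p r - q²) B (0, 1) (0, 1)`
  have hpq := hB (p, q)
  have h01 := hB (0, 1)
  rw [B.apply_prod_apply_prod] at hpq h01
  nlinarith

/-- `∇·(A ∇u)` for `A = !![a11, a12; a12, a22]`. -/
def divAGrad (a11 a12 a22 u : ℝ × ℝ → ℝ) (z : ℝ × ℝ) : ℝ :=
  px (fun w => a11 w * px u w + a12 w * py u w) z + py (fun w => a12 w * px u w + a22 w * py u w) z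

theorem divAGrad_neg (a11 a12 a22 u : ℝ × ℝ → ℝ) (z : ℝ × ℝ) :
    divAGrad a11 a12 a22 (fun w => -u w) z = -divAGrad a11 a12 a22 u z := by
  simp only [divAGrad, px, py, fderiv_fun_neg, neg_apply, mul_neg, ← neg_add]

theorem divAGrad_eq {a11 a12 a22 u : ℝ × ℝ → ℝ} {z : ℝ × ℝ}
    (h11 : DifferentiableAt ℝ a11 z) (h12 : DifferentiableAt ℝ a12 z)
    (h22 : DifferentiableAt ℝ a22 z) (hu : DifferentiableAt ℝ (fderiv ℝ u) z) :
    divAGrad a11 a12 a22 u z = a11 z * fderiv ℝ (fderiv ℝ u) z (1, 0) (1, 0)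
      + a12 z * (fderiv ℝ (fderiv ℝ u) z (1, 0) (0, 1) + fderiv ℝ (fderiv ℝ u) z (0, 1) (1, 0))
      + a22 z * fderiv ℝ (fderiv ℝ u) z (0, 1) (0, 1)
      + (px a11 z + py a12 z) * px u z + (px a12 z + py a22 z) * py u z := by
  have hx : DifferentiableAt ℝ (fun y => fderiv ℝ u y (1, 0)) z :=
    hu.clm_apply (differentiableAt_const _)
  have hy : DifferentiableAt ℝ (fun y => fderiv ℝ u y (0, 1)) z :=
    hu.clm_apply (differentiableAt_const _)
  unfold divAGrad px py
  rw [fderiv_fun_add (h11.fun_mul hx) (h12.fun_mul hy),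
    fderiv_fun_add (h12.fun_mul hx) (h22.fun_mul hy), fderiv_fun_mul h11 hx, fderiv_fun_mul h12 hy,
    fderiv_fun_mul h12 hx, fderiv_fun_mul h22 hy]
  simp only [add_apply, smul_apply, smul_eq_mul, fderiv_fderiv_apply hu]
  ring

theorem hasFDerivAt_mul_exp_fst (c α : ℝ) (w : ℝ × ℝ) :
    HasFDerivAt (fun w : ℝ × ℝ => c * Real.exp (α * w.1))
      ((c * α * Real.exp (α * w.1)) • ContinuousLinearMap.fst ℝ ℝ ℝ) w := by
  have hfst : HasFDerivAt (Prod.fst : ℝ × ℝ → ℝ) (ContinuousLinearMap.fst ℝ ℝ ℝ) w :=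
    hasFDerivAt_fst
  refine ((hfst.const_mul α).exp.const_mul c).congr_fderiv ?_
  ext <;> simp [mul_comm, mul_assoc]

theorem fderiv_fderiv_mul_exp_fst (c α : ℝ) (z v w : ℝ × ℝ) :
    fderiv ℝ (fderiv ℝ fun w : ℝ × ℝ => c * Real.exp (α * w.1)) z v w
      = c * α * α * Real.exp (α * z.1) * v.1 * w.1 := by
  have hD : fderiv ℝ (fun w : ℝ × ℝ => c * Real.exp (α * w.1))
      = fun y => (c * α * Real.exp (α * y.1)) • ContinuousLinearMap.fst ℝ ℝ ℝ :=
    funext fun y => (hasFDerivAt_mul_exp_fst c α y).fderiv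
  rw [hD, ((hasFDerivAt_mul_exp_fst (c * α) α z).smul_const (ContinuousLinearMap.fst ℝ ℝ ℝ)).fderiv]
  simp

theorem divAGrad_neg_of_isLocalMax_add_mul_exp {a11 a12 a22 u : ℝ × ℝ → ℝ} {z : ℝ × ℝ}
    {ε α : ℝ} (hε : 0 < ε) (hu : ContDiffAt ℝ 2 u z) (h11 : DifferentiableAt ℝ a11 z)
    (h12 : DifferentiableAt ℝ a12 z) (h22 : DifferentiableAt ℝ a22 z)
    (hA : (!![a11 z, a12 z; a12 z, a22 z] : Matrix (Fin 2) (Fin 2) ℝ).PosDef)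
    (hα : |px a11 z + py a12 z| < α * a11 z)
    (hmax : IsLocalMax (fun w => u w + ε * Real.exp (α * w.1)) z) :
    divAGrad a11 a12 a22 u z < 0 := by
  set φ : ℝ × ℝ → ℝ := fun w => ε * Real.exp (α * w.1) with hφ_def
  set e := Real.exp (α * z.1)
  have hφ : ContDiffAt ℝ 2 φ z := by fun_prop
  have hgrad : fderiv ℝ u z = -((ε * α * e) • ContinuousLinearMap.fst ℝ ℝ ℝ) := by
    have h := hmax.fderiv_eq_zero
    rw [fderiv_fun_add (hu.differentiableAt (by norm_num)) (hφ.differentiableAt (by norm_num)),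
      (hasFDerivAt_mul_exp_fst ε α z).fderiv] at h
    exact eq_neg_of_add_eq_zero_left h
  have hhess : ∀ w, (fderiv ℝ (fderiv ℝ u) z + fderiv ℝ (fderiv ℝ φ) z) w w ≤ 0 := by
    rw [← fderiv_fderiv_add hu hφ]
    exact hmax.fderiv_fderiv_apply_self_nonpos (hu.add hφ)
  have htrace := hA.fin_two_apply_add_nonpos hhess
  simp only [add_apply, hφ_def, fderiv_fderiv_mul_exp_fst] at htrace
  have hpx : px u z = -(ε * α * e) := by simp [px, hgrad]
  have hpy : py u z = 0 := by simp [py, hgrad]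
  have ha11 : 0 < a11 z := by simpa using hA.diag_pos (i := 0)
  have hα0 : 0 < α := pos_of_mul_pos_left ((abs_nonneg _).trans_lt hα) ha11.le
  have hpos : 0 < ε * α * e * (α * a11 z + (px a11 z + py a12 z)) := by
    have := neg_abs_le (px a11 z + py a12 z)
    exact mul_pos (by positivity) (by linarith)
  rw [divAGrad_eq h11 h12 h22 ((hu.fderiv_right (m := 1) (by norm_num)).differentiableAt
    (by norm_num)), hpx, hpy]
  linarith

theorem IsCompact.exists_forall_lt_mul {X : Type*} [TopologicalSpace X] {K : Set X}
    {f g : X → ℝ} (hK : IsCompact K) (hf : ContinuousOn f K) (hg : ContinuousOn g K)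
    (hpos : ∀ x ∈ K, 0 < g x) : ∃ α, ∀ x ∈ K, f x < α * g x := by
  obtain ⟨C, hC⟩ := hK.exists_bound_of_continuousOn (hf.div hg fun x hx => (hpos x hx).ne')
  refine ⟨C + 1, fun x hx => ?_⟩
  have hfg : f x / g x ≤ C := (le_abs_self _).trans (hC x hx)
  rw [div_le_iff₀ (hpos x hx)] at hfg
  linarith [hpos x hx]

theorem IsCompact.exists_pos_forall_mul_lt {X : Type*} [TopologicalSpace X] {K : Set X}
    {g : X → ℝ} (hK : IsCompact K) (hg : ContinuousOn g K) {δ : ℝ} (hδ : 0 < δ) :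
    ∃ ε > 0, ∀ x ∈ K, ε * g x < δ := by
  obtain ⟨C, hC⟩ := hK.exists_bound_of_continuousOn hg
  refine ⟨δ / (|C| + 1), by positivity, fun x hx => ?_⟩
  have hgx : g x ≤ |C| := (le_abs_self _).trans ((hC x hx).trans (le_abs_self C))
  calc δ / (|C| + 1) * g x ≤ δ / (|C| + 1) * |C| := by gcongr
    _ < δ / (|C| + 1) * (|C| + 1) := by gcongr; linarith
    _ = δ := div_mul_cancel₀ _ (by positivity)

section Superlevel

variable {X : Type*} [TopologicalSpace X] {U : Set X} {u : X → ℝ}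

theorem closure_inter_preimage_Ioi_zero_subset (hU : IsOpen U)
    (hbd : ∀ z ∈ frontier U, u z ≤ 0) : closure U ∩ u ⁻¹' Ioi 0 ⊆ U := by
  intro z ⟨hzU, hz⟩
  by_contra hz'
  exact (hbd z (hU.frontier_eq ▸ ⟨hzU, hz'⟩)).not_gt hz

theorem closure_inter_preimage_Ioi_subset {δ : ℝ} (hU : IsOpen U)
    (hu : ContinuousOn u (closure U)) (hbd : ∀ z ∈ frontier U, u z ≤ 0) (hδ : 0 < δ) :
    closure (U ∩ u ⁻¹' Ioi δ) ⊆ U ∩ u ⁻¹' Ici δ := by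
  have hcl : closure (U ∩ u ⁻¹' Ioi δ) ⊆ closure U ∩ u ⁻¹' Ici δ :=
    closure_minimal (inter_subset_inter subset_closure (preimage_mono Ioi_subset_Ici_self))
      (hu.preimage_isClosed_of_isClosed isClosed_closure isClosed_Ici)
  intro z hz
  exact ⟨closure_inter_preimage_Ioi_zero_subset hU hbd ⟨(hcl hz).1, hδ.trans_le (hcl hz).2⟩,
    (hcl hz).2⟩

end Superlevel

theorem nonpos_of_divAGrad_sub_nonneg {U : Set (ℝ × ℝ)} {a11 a12 a22 a u : ℝ × ℝ → ℝ}
    (hUo : IsOpen U) (hUb : Bornology.IsBounded U)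
    (ha11 : ContDiffOn ℝ 1 a11 U) (ha12 : ContDiffOn ℝ 1 a12 U) (ha22 : ContDiffOn ℝ 1 a22 U)
    (hA : ∀ z ∈ U, (!![a11 z, a12 z; a12 z, a22 z] : Matrix (Fin 2) (Fin 2) ℝ).PosDef)
    (ha0 : ∀ z ∈ U, 0 ≤ a z) (huc : ContinuousOn u (closure U)) (hu : ContDiffOn ℝ 2 u U)
    (hsub : ∀ z ∈ U, 0 ≤ divAGrad a11 a12 a22 u z - a z * u z)
    (hbd : ∀ z ∈ frontier U, u z ≤ 0) :
    ∀ z ∈ closure U, u z ≤ 0 := by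
  by_contra! ⟨z0, hz0, hu0⟩
  have hcomp : IsCompact (closure U) := hUb.isCompact_closure
  obtain ⟨zM, hzM, hmax⟩ := hcomp.exists_isMaxOn ⟨z0, hz0⟩ huc
  set δ := u zM / 2 with hδ_def
  have hδ : 0 < δ := by linarith [show u z0 ≤ u zM from hmax hz0]
  set W := U ∩ u ⁻¹' Ioi δ
  have hWo : IsOpen W := (huc.mono subset_closure).isOpen_inter_preimage hUo isOpen_Ioi
  have hKU : closure W ⊆ U ∩ u ⁻¹' Ici δ := closure_inter_preimage_Ioi_subset hUo huc hbd hδ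
  have hK : IsCompact (closure W) :=
    hcomp.of_isClosed_subset isClosed_closure (closure_mono inter_subset_left)
  have hzMW : zM ∈ W := ⟨closure_inter_preimage_Ioi_zero_subset hUo hbd
    ⟨hzM, show 0 < u zM by linarith⟩, show δ < u zM by linarith⟩
  have hb : ContinuousOn (fun z => px a11 z + py a12 z) U :=
    ((ha11.continuousOn_fderiv_of_isOpen hUo le_rfl).clm_apply continuousOn_const).add
      ((ha12.continuousOn_fderiv_of_isOpen hUo le_rfl).clm_apply continuousOn_const)
  obtain ⟨α, hα⟩ := hK.exists_forall_lt_mul (hb.abs.mono fun z hz => (hKU hz).1)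
    (ha11.continuousOn.mono fun z hz => (hKU hz).1)
    (fun z hz => by simpa using (hA z (hKU hz).1).diag_pos (i := 0))
  obtain ⟨ε, hε, hsmall⟩ := hK.exists_pos_forall_mul_lt
    (g := fun z => Real.exp (α * z.1)) (by fun_prop) hδ
  obtain ⟨z1, hz1, hz1max⟩ := hK.exists_isLocalMax_mem_open
    (f := fun w => u w + ε * Real.exp (α * w.1)) subset_closure
    ((huc.mono (closure_mono inter_subset_left)).add (by fun_prop)) (subset_closure hzMW)
    (fun z ⟨hzK, hzW⟩ => by
      have hzδ : u z ≤ δ := not_lt.1 fun h => hzW ⟨(hKU hzK).1, h⟩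
      have := hsmall z hzK
      have : 0 < ε * Real.exp (α * zM.1) := by positivity
      linarith) hWo
  have hz1U : U ∈ 𝓝 z1 := hUo.mem_nhds hz1.1
  have hneg := divAGrad_neg_of_isLocalMax_add_mul_exp hε (hu.contDiffAt hz1U)
    ((ha11.differentiableOn one_ne_zero).differentiableAt hz1U)
    ((ha12.differentiableOn one_ne_zero).differentiableAt hz1U)
    ((ha22.differentiableOn one_ne_zero).differentiableAt hz1U)
    (hA z1 hz1.1) (hα z1 (subset_closure hz1)) hz1max
  have hau : 0 ≤ a z1 * u z1 := mul_nonneg (ha0 z1 hz1.1) (hδ.trans hz1.2).le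
  linarith [hsub z1 hz1.1]

theorem stmt9_general (U : Set (ℝ × ℝ)) (hUo : IsOpen U)
    (hUb : Bornology.IsBounded U)
    (a11 a12 a22 a u : ℝ × ℝ → ℝ)
    (ha11 : ContDiffOn ℝ 1 a11 U)
    (ha12 : ContDiffOn ℝ 1 a12 U)
    (ha22 : ContDiffOn ℝ 1 a22 U)
    (hpd : ∀ z ∈ closure U, (!![a11 z, a12 z; a12 z, a22 z] : Matrix (Fin 2) (Fin 2) ℝ).PosDef)
    (ha0 : ∀ z ∈ U, 0 ≤ a z)
    (huc : ContinuousOn u (closure U)) (hu : ContDiffOn ℝ 2 u U)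
    (hpde : ∀ z ∈ U,
      px (fun w => a11 w * px u w + a12 w * py u w) z
        + py (fun w => a12 w * px u w + a22 w * py u w) z - a z * u z = 0)
    (hbd : ∀ z ∈ frontier U, u z = 0) :
    ∀ z ∈ closure U, u z = 0 := by
  have hA : ∀ z ∈ U, (!![a11 z, a12 z; a12 z, a22 z] : Matrix (Fin 2) (Fin 2) ℝ).PosDef :=
    fun z hz => hpd z (subset_closure hz)
  have hpde' : ∀ z ∈ U, divAGrad a11 a12 a22 u z - a z * u z = 0 := hpde
  have hle := nonpos_of_divAGrad_sub_nonneg hUo hUb ha11 ha12 ha22 hA ha0 huc hu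
    (fun z hz => (hpde' z hz).ge) (fun z hz => (hbd z hz).le)
  have hge := nonpos_of_divAGrad_sub_nonneg (u := fun w => -u w) hUo hUb ha11 ha12 ha22 hA ha0
    huc.neg hu.neg (fun z hz => by rw [divAGrad_neg]; linarith [hpde' z hz])
    (fun z hz => by simp [hbd z hz])
  exact fun z hz => le_antisymm (hle z hz) (neg_nonpos.1 (hge z hz))

/-- Uniqueness for the Dirichlet problem for the divergence-form elliptic operator
`∇·(A∇u) - a u` with symmetric positive definite coefficient matrix `A` and `a ≥ 0`,
on a nonempty bounded open set `U ⊆ ℝ²`: a solution that is continuous up to the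
boundary and vanishes on the topological frontier vanishes identically. -/
theorem stmt9 (U : Set (ℝ × ℝ)) (hUne : U.Nonempty) (hUo : IsOpen U)
    (hUb : Bornology.IsBounded U)
    (a11 a12 a22 a u : ℝ × ℝ → ℝ)
    (ha11 : ContDiffOn ℝ 1 a11 U) (ha11c : ContinuousOn a11 (closure U))
    (ha12 : ContDiffOn ℝ 1 a12 U) (ha12c : ContinuousOn a12 (closure U))
    (ha22 : ContDiffOn ℝ 1 a22 U) (ha22c : ContinuousOn a22 (closure U))
    (hpd : ∀ z ∈ closure U, (!![a11 z, a12 z; a12 z, a22 z] : Matrix (Fin 2) (Fin 2) ℝ).PosDef)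
    (ha : ContinuousOn a U) (ha0 : ∀ z ∈ U, 0 ≤ a z)
    (huc : ContinuousOn u (closure U)) (hu : ContDiffOn ℝ 2 u U)
    (hpde : ∀ z ∈ U,
      px (fun w => a11 w * px u w + a12 w * py u w) z
        + py (fun w => a12 w * px u w + a22 w * py u w) z - a z * u z = 0)
    (hbd : ∀ z ∈ frontier U, u z = 0) :
    ∀ z ∈ closure U, u z = 0 :=
  stmt9_general U hUo hUb a11 a12 a22 a u ha11 ha12 ha22 hpd ha0 huc hu hpde hbd
end
end
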